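/- For all n ∈ ℕ and all 0 ≤ i, j ≤ n, the entries of U_n satisfy the closed-form formula U_n[i,j] = Σ_{α ∈ Q^I_{j,i}} ∏_{r=i}^{j−1} t_{α_{j−r}, r+1} (where the empty sum is 0 and the empty product is 1). -/
import Mathlib


/-- The heights of a `U^m_n`-path of order `n` (the abscissas `x i = m + i` are
determined, so only the heights `y i ∈ {0, …, n}`, encoded as `Fin (n+1)`, are recorded):
`y (k+1) ∈ {y k, y k + 1}` and a rise step at position `k` forces `y k ≥ k`. -/
def IsUPath (n : ℕ) (y : Fin (n + 1) → Fin (n + 1)) : Prop :=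
  ∀ k : Fin n,
    ((y k.succ = y k.castSucc ∨ (y k.succ : ℕ) = (y k.castSucc : ℕ) + 1) ∧
      ((y k.succ : ℕ) = (y k.castSucc : ℕ) + 1 → (k : ℕ) ≤ (y k.castSucc : ℕ)))

/-- The weight of a `U`-type path: a rise step from `(k, j)` to `(k+1, j+1)` has weight
`t (j - k) (j + 1)` and a horizontal step has weight `1`; the weight of the path is the
product of the weights of its steps. -/
def uweight {R : Type*} [CommRing R] (n : ℕ) (t : ℕ → ℕ → R)
    (y : Fin (n + 1) → Fin (n + 1)) : R :=
  ∏ k : Fin n,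
    if (y k.succ : ℕ) = (y k.castSucc : ℕ) + 1
    then t ((y k.castSucc : ℕ) - (k : ℕ)) ((y k.castSucc : ℕ) + 1) else 1

open scoped Classical in
/-- The matrix `U n`: its `(i, j)` entry is the sum of the weights of all `U^0_n`-paths
with `y 0 = i` and `y n = j`. -/
noncomputable def Umat {R : Type*} [CommRing R] (n : ℕ) (t : ℕ → ℕ → R) :
    Matrix (Fin (n + 1)) (Fin (n + 1)) R :=
  Matrix.of fun i j =>
    ∑ y ∈ Finset.univ.filter
        (fun y : Fin (n + 1) → Fin (n + 1) => IsUPath n y ∧ y 0 = i ∧ y (Fin.last n) = j),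
      uweight n t y

open scoped Classical in
/-- `Q^I_{i,j}`: for `i ≥ j`, the weakly increasing sequences `α₁ ≤ … ≤ α_{i-j}` of
nonnegative integers with `αᵣ ≤ i - r` (here zero-indexed, so `α k ≤ i - (k+1)`; the
values are encoded in `Fin (i+1)`); for `i = j` only the empty sequence, and for `i < j`
the empty set. -/
noncomputable def QIset (i j : ℕ) : Finset (Fin (i - j) → Fin (i + 1)) :=
  if j ≤ i then
    Finset.univ.filter
      (fun α => Monotone α ∧ ∀ r : Fin (i - j), (α r : ℕ) ≤ i - ((r : ℕ) + 1))
  else ∅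



open Finset

/-- A lower predicate on `Fin N` holds exactly on an initial segment of length the
cardinality of its support. -/
lemma lowerset_iff_lt_card {N : ℕ} (P : Fin N → Prop) [DecidablePred P]
    (hP : ∀ k k' : Fin N, k ≤ k' → P k' → P k) (k : Fin N) :
    P k ↔ (k : ℕ) < #(univ.filter P) := by
  constructor
  · intro h
    have hsub : Finset.Iic k ⊆ univ.filter P := by
      intro x hx
      simp only [Finset.mem_Iic] at hx
      simp only [Finset.mem_filter, Finset.mem_univ, true_and]
      exact hP x k hx h
    have := Finset.card_le_card hsub
    rw [Fin.card_Iic] at this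
    omega
  · intro h
    by_contra hk
    have hsub : univ.filter P ⊆ Finset.Iio k := by
      intro x hx
      simp only [Finset.mem_filter] at hx
      simp only [Finset.mem_Iio]
      by_contra hxk
      exact hk (hP k x (le_of_not_gt hxk) hx.2)
    have := Finset.card_le_card hsub
    rw [Fin.card_Iio] at this
    omega

lemma card_filter_lt_val (N c : ℕ) (h : c ≤ N) :
    #(Finset.univ.filter fun q : Fin N => (q : ℕ) < c) = c := by
  classical
  rw [← Finset.card_image_of_injective _ Fin.val_injective]
  have : (Finset.univ.filter fun q : Fin N => (q : ℕ) < c).image Fin.val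
      = Finset.range c := by
    ext a
    simp only [Finset.mem_image, Finset.mem_filter, Finset.mem_univ, true_and,
      Finset.mem_range]
    constructor
    · rintro ⟨q, hq, rfl⟩; exact hq
    · intro ha; exact ⟨⟨a, by omega⟩, ha, rfl⟩
  rw [this, Finset.card_range]

lemma card_filter_le_val (N c : ℕ) (h : c ≤ N) :
    #(Finset.univ.filter fun q : Fin N => c ≤ (q : ℕ)) = N - c := by
  classical
  have h1 := Finset.card_filter_add_card_filter_not
    (s := (Finset.univ : Finset (Fin N))) (p := fun q : Fin N => (q : ℕ) < c)
  have h2 : (Finset.univ.filter fun q : Fin N => ¬ (q : ℕ) < c)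
      = (Finset.univ.filter fun q : Fin N => c ≤ (q : ℕ)) := by
    apply Finset.filter_congr; intro x _; simp [not_lt]
  rw [card_filter_lt_val N c h, h2, Finset.card_univ, Fintype.card_fin] at h1
  omega


lemma upath_step {n : ℕ} {y : Fin (n + 1) → Fin (n + 1)} (hy : IsUPath n y)
    (c : ℕ) (hc : c < n) :
    ((y ⟨c + 1, by omega⟩ : ℕ) = y ⟨c, by omega⟩ ∨
      (y ⟨c + 1, by omega⟩ : ℕ) = (y ⟨c, by omega⟩ : ℕ) + 1) ∧
    ((y ⟨c + 1, by omega⟩ : ℕ) = (y ⟨c, by omega⟩ : ℕ) + 1 →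
      c ≤ (y ⟨c, by omega⟩ : ℕ)) := by
  have h := hy ⟨c, hc⟩
  simp only [Fin.succ_mk, Fin.castSucc_mk] at h
  refine ⟨?_, h.2⟩
  rcases h.1 with h1 | h1
  · left; exact congrArg Fin.val h1
  · right; exact h1

lemma upath_pair {n : ℕ} {y : Fin (n + 1) → Fin (n + 1)} (hy : IsUPath n y) :
    ∀ b : ℕ, ∀ _hb : b ≤ n, ∀ a : ℕ, ∀ _ha : a ≤ b,
      (y ⟨a, by omega⟩ : ℕ) ≤ (y ⟨b, by omega⟩ : ℕ) ∧
      (y ⟨b, by omega⟩ : ℕ) ≤ (y ⟨a, by omega⟩ : ℕ) + (b - a) := by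
  intro b
  induction b with
  | zero => intro _ a ha; interval_cases a; simp
  | succ c ih =>
    intro hb a ha
    rcases Nat.lt_or_ge a (c + 1) with h | h
    · have h1 := ih (by omega) a (by omega)
      have h2 := (upath_step hy c (by omega)).1
      rcases h2 with h2 | h2 <;> omega
    · have : a = c + 1 := by omega
      subst this
      simp

section PathSide

open scoped Classical in
noncomputable def cy {n : ℕ} (y : Fin (n + 1) → Fin (n + 1)) (h : ℕ) : ℕ :=
  #(Finset.univ.filter fun k : Fin (n + 1) => (y k : ℕ) ≤ h)

variable {n : ℕ} {y : Fin (n + 1) → Fin (n + 1)}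

lemma upath_pair' (hy : IsUPath n y) (k k' : Fin (n + 1)) (h : k ≤ k') :
    (y k : ℕ) ≤ (y k' : ℕ) ∧ (y k' : ℕ) ≤ (y k : ℕ) + ((k' : ℕ) - (k : ℕ)) := by
  have hk' : (k' : ℕ) ≤ n := Fin.is_le k'
  have hkk : (k : ℕ) ≤ (k' : ℕ) := h
  have := upath_pair hy (k' : ℕ) hk' (k : ℕ) hkk
  simpa only [Fin.eta] using this

lemma upath_step' (hy : IsUPath n y) (k k' : Fin (n + 1)) (hk : (k : ℕ) < n)
    (h : (k' : ℕ) = (k : ℕ) + 1) :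
    ((y k' : ℕ) = y k ∨ (y k' : ℕ) = (y k : ℕ) + 1) ∧
      ((y k' : ℕ) = (y k : ℕ) + 1 → (k : ℕ) ≤ (y k : ℕ)) := by
  have hs := upath_step hy (k : ℕ) hk
  have e1 : (⟨(k : ℕ), by omega⟩ : Fin (n + 1)) = k := Fin.eta k (by omega)
  have e2 : (⟨(k : ℕ) + 1, by omega⟩ : Fin (n + 1)) = k' := by
    apply Fin.ext; simp [h]
  rw [e1, e2] at hs
  exact hs

lemma cy_iff (hy : IsUPath n y) (h : ℕ) (k : Fin (n + 1)) :
    (y k : ℕ) ≤ h ↔ (k : ℕ) < cy y h := by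
  classical
  have hl := lowerset_iff_lt_card (fun k : Fin (n + 1) => (y k : ℕ) ≤ h)
    (fun a b hab hb => le_trans (upath_pair' hy a b hab).1 hb) k
  unfold cy
  convert hl using 3

lemma cy_mono {h h' : ℕ} (hh : h ≤ h') : cy y h ≤ cy y h' := by
  unfold cy
  apply Finset.card_le_card
  intro k hk
  simp only [Finset.mem_filter, Finset.mem_univ, true_and] at hk ⊢
  omega

lemma cy_le {j : ℕ} (hy : IsUPath n y) (hyn : (y (Fin.last n) : ℕ) = j) {h : ℕ}
    (hh : h < j) : cy y h ≤ n := by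
  by_contra hc
  push_neg at hc
  have := (cy_iff hy h (Fin.last n)).2 (by simp only [Fin.val_last]; omega)
  omega

lemma cy_pos {i : ℕ} (hy : IsUPath n y) (hy0 : (y 0 : ℕ) = i) {h : ℕ} (hh : i ≤ h) :
    1 ≤ cy y h := by
  have := (cy_iff hy h 0).1 (by omega)
  omega

lemma rise_facts {i j : ℕ} (hy : IsUPath n y) (hy0 : (y 0 : ℕ) = i)
    (hyn : (y (Fin.last n) : ℕ) = j) {h : ℕ} (h1 : i ≤ h) (h2 : h < j)
    (k : Fin (n + 1)) (hk : (k : ℕ) = cy y h - 1) :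
    (y k : ℕ) = h ∧ (k : ℕ) ≤ h := by
  have hn' : cy y h ≤ n := cy_le hy hyn h2
  have hp : 1 ≤ cy y h := cy_pos hy hy0 h1
  have ha : (y k : ℕ) ≤ h := (cy_iff hy h k).2 (by omega)
  have hk'lt : (k : ℕ) + 1 < n + 1 := by omega
  set k' : Fin (n + 1) := ⟨(k : ℕ) + 1, hk'lt⟩ with hk'def
  have hb : ¬ (y k' : ℕ) ≤ h := by
    intro hc
    have := (cy_iff hy h k').1 hc
    simp only [hk'def] at this
    omega
  have hstep := upath_step' hy k k' (by omega) (by simp [hk'def])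
  rcases hstep.1 with hor | hor
  · omega
  · have := hstep.2 hor
    omega

end PathSide


/-- Position of the rise indexed by `q` determined by a `Q^I`-sequence `α`. -/
def Kv {i j : ℕ} (α : Fin (j - i) → Fin (j + 1)) (q : Fin (j - i)) : ℕ :=
  j - 1 - (q : ℕ) - (α q : ℕ)

open scoped Classical in
/-- Number of rises strictly before abscissa `k`. -/
noncomputable def cA {i j : ℕ} (α : Fin (j - i) → Fin (j + 1)) (k : ℕ) : ℕ :=
  #(univ.filter fun q : Fin (j - i) => Kv α q < k)

variable {i j : ℕ} {α : Fin (j - i) → Fin (j + 1)}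

lemma kv_lt (hmono : Monotone α) (hbd : ∀ q : Fin (j - i), (α q : ℕ) ≤ j - ((q : ℕ) + 1))
    {q q' : Fin (j - i)} (h : q < q') : Kv α q' < Kv α q := by
  have hm : (α q : ℕ) ≤ (α q' : ℕ) := hmono (le_of_lt h)
  have h1 := hbd q
  have h2 := hbd q'
  have h3 : (q' : ℕ) < j - i := q'.isLt
  have h4 : (q : ℕ) < (q' : ℕ) := h
  unfold Kv
  omega

lemma kv_le (hmono : Monotone α) (hbd : ∀ q : Fin (j - i), (α q : ℕ) ≤ j - ((q : ℕ) + 1))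
    {q q' : Fin (j - i)} (h : q ≤ q') : Kv α q' ≤ Kv α q := by
  rcases eq_or_lt_of_le h with rfl | h
  · exact le_rfl
  · exact le_of_lt (kv_lt hmono hbd h)

lemma kv_claimA (hmono : Monotone α)
    (hbd : ∀ q : Fin (j - i), (α q : ℕ) ≤ j - ((q : ℕ) + 1))
    (q : Fin (j - i)) (k : ℕ) :
    Kv α q < k ↔ (j - i) - (q : ℕ) ≤ cA α k := by
  classical
  constructor
  · intro h
    have hsub : Finset.Ici q ⊆ univ.filter fun q' => Kv α q' < k := by
      intro q' hq'
      simp only [Finset.mem_Ici] at hq'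
      simp only [Finset.mem_filter, Finset.mem_univ, true_and]
      exact lt_of_le_of_lt (kv_le hmono hbd hq') h
    have := Finset.card_le_card hsub
    rw [Fin.card_Ici] at this
    unfold cA
    convert this using 2
  · intro h
    by_contra hk
    have hsub : (univ.filter fun q' => Kv α q' < k) ⊆ Finset.Ioi q := by
      intro q' hq'
      simp only [Finset.mem_filter, Finset.mem_univ, true_and] at hq'
      simp only [Finset.mem_Ioi]
      by_contra hle
      exact hk (lt_of_le_of_lt (kv_le hmono hbd (le_of_not_gt hle)) hq')
    have hc := Finset.card_le_card hsub
    rw [Fin.card_Ioi] at hc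
    have hq := q.isLt
    unfold cA at h
    omega

lemma cA_le (k : ℕ) : cA α k ≤ j - i := by
  unfold cA
  calc #(univ.filter fun q : Fin (j - i) => Kv α q < k) ≤ #(univ : Finset (Fin (j - i))) :=
        Finset.card_le_card (Finset.filter_subset _ _)
    _ = j - i := by simp

lemma cA_zero : cA α 0 = 0 := by
  unfold cA
  rw [Finset.card_eq_zero, Finset.filter_eq_empty_iff]
  intro q _
  omega

lemma cA_top {k : ℕ} (hjk : j ≤ k) : cA α k = j - i := by
  unfold cA
  have : (univ.filter fun q : Fin (j - i) => Kv α q < k) = univ := by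
    rw [Finset.filter_eq_self]
    intro q _
    have hq := q.isLt
    unfold Kv
    omega
  rw [this]
  simp

lemma cA_mono {k k' : ℕ} (h : k ≤ k') : cA α k ≤ cA α k' := by
  apply Finset.card_le_card
  intro q hq
  simp only [Finset.mem_filter, Finset.mem_univ, true_and] at hq ⊢
  omega

lemma cA_kv (hmono : Monotone α)
    (hbd : ∀ q : Fin (j - i), (α q : ℕ) ≤ j - ((q : ℕ) + 1)) (q : Fin (j - i)) :
    cA α (Kv α q) = (j - i) - 1 - (q : ℕ) ∧ cA α (Kv α q + 1) = (j - i) - (q : ℕ) := by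
  have hq := q.isLt
  have hub : cA α (Kv α q) < (j - i) - (q : ℕ) := by
    by_contra h
    have := (kv_claimA hmono hbd q (Kv α q)).2 (by omega)
    omega
  have hub2 : cA α (Kv α q + 1) ≥ (j - i) - (q : ℕ) :=
    (kv_claimA hmono hbd q (Kv α q + 1)).1 (by omega)
  have hlb : (j - i) - 1 - (q : ℕ) ≤ cA α (Kv α q) := by
    rcases Nat.lt_or_ge ((q : ℕ) + 1) (j - i) with h | h
    · have hlt : q < (⟨(q : ℕ) + 1, h⟩ : Fin (j - i)) := by
        rw [Fin.lt_def]; simp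
      have hkv := kv_lt hmono hbd hlt
      have h2 := (kv_claimA hmono hbd ⟨(q : ℕ) + 1, h⟩ (Kv α q)).1 hkv
      simp only [Fin.val_mk] at h2
      omega
    · omega
  have hub3 : cA α (Kv α q + 1) ≤ (j - i) - (q : ℕ) := by
    rcases Nat.eq_zero_or_pos (q : ℕ) with h0 | h0
    · have := cA_le (α := α) (Kv α q + 1)
      omega
    · have hlt : (⟨(q : ℕ) - 1, by omega⟩ : Fin (j - i)) < q := by
        rw [Fin.lt_def]; simp; omega
      have hkk : Kv α q < Kv α ⟨(q : ℕ) - 1, by omega⟩ := kv_lt hmono hbd hlt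
      by_contra h
      have h2 := (kv_claimA hmono hbd ⟨(q : ℕ) - 1, by omega⟩ (Kv α q + 1)).2 (by
        simp only [Fin.val_mk]; omega)
      omega
  have hmn := cA_mono (α := α) (Nat.le_succ (Kv α q))
  omega

lemma kv_injective (hmono : Monotone α)
    (hbd : ∀ q : Fin (j - i), (α q : ℕ) ≤ j - ((q : ℕ) + 1))
    {q q' : Fin (j - i)} (h : Kv α q = Kv α q') : q = q' := by
  rcases lt_trichotomy q q' with hlt | heq | hlt
  · have := kv_lt hmono hbd hlt; omega
  · exact heq
  · have := kv_lt hmono hbd hlt; omega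

lemma cA_succ_no_rise {k : ℕ} (h : ∀ q : Fin (j - i), Kv α q ≠ k) :
    cA α (k + 1) = cA α k := by
  unfold cA
  congr 1
  apply Finset.filter_congr
  intro q _
  have := h q
  constructor
  · intro h2; omega
  · intro h2; omega

section Bijection

variable {n i j : ℕ}

noncomputable def Fmap (n j i : ℕ) (y : Fin (n + 1) → Fin (n + 1)) (q : Fin (j - i)) :
    Fin (j + 1) :=
  ⟨j - 1 - (q : ℕ) - (cy y (j - 1 - (q : ℕ)) - 1), by omega⟩

noncomputable def Gmap (n i j : ℕ) (_hij : i ≤ j) (hjn : j ≤ n)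
    (α : Fin (j - i) → Fin (j + 1)) (k : Fin (n + 1)) : Fin (n + 1) :=
  ⟨i + cA α (k : ℕ), by have := cA_le (α := α) (k : ℕ); omega⟩

variable {α : Fin (j - i) → Fin (j + 1)}

lemma Gmap_isUPath (hij : i ≤ j) (hjn : j ≤ n) (hmono : Monotone α)
    (hbd : ∀ q : Fin (j - i), (α q : ℕ) ≤ j - ((q : ℕ) + 1)) :
    IsUPath n (Gmap n i j hij hjn α) := by
  intro k
  have hsv : ((Gmap n i j hij hjn α) k.succ : ℕ) = i + cA α ((k : ℕ) + 1) := rfl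
  have hcv : ((Gmap n i j hij hjn α) k.castSucc : ℕ) = i + cA α (k : ℕ) := rfl
  by_cases hex : ∃ q, Kv α q = (k : ℕ)
  · obtain ⟨q, hq⟩ := hex
    have h1 := (cA_kv hmono hbd q).1
    have h2 := (cA_kv hmono hbd q).2
    rw [hq] at h1 h2
    have hqlt := q.isLt
    have hkv : j - 1 - (q : ℕ) - (α q : ℕ) = (k : ℕ) := hq
    have hbq := hbd q
    constructor
    · right; omega
    · intro _; omega
  · push_neg at hex
    have h0 := cA_succ_no_rise (k := (k : ℕ)) hex
    constructor
    · left; apply Fin.ext; omega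
    · intro hcon; omega

lemma Gmap_zero (hij : i ≤ j) (hjn : j ≤ n) :
    ((Gmap n i j hij hjn α) 0 : ℕ) = i := by
  have h0 : ((Gmap n i j hij hjn α) 0 : ℕ) = i + cA α ((0 : Fin (n + 1)) : ℕ) := rfl
  rw [h0]
  simp [cA_zero]

lemma Gmap_last (hij : i ≤ j) (hjn : j ≤ n) :
    ((Gmap n i j hij hjn α) (Fin.last n) : ℕ) = j := by
  have h0 : ((Gmap n i j hij hjn α) (Fin.last n) : ℕ) = i + cA α n := rfl
  rw [h0, cA_top hjn]
  omega

lemma FGmap (hij : i ≤ j) (hjn : j ≤ n) (hmono : Monotone α)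
    (hbd : ∀ q : Fin (j - i), (α q : ℕ) ≤ j - ((q : ℕ) + 1)) :
    Fmap n j i (Gmap n i j hij hjn α) = α := by
  classical
  funext q
  apply Fin.ext
  have hqlt := q.isLt
  have hbq := hbd q
  have hkv : Kv α q = j - 1 - (q : ℕ) - (α q : ℕ) := rfl
  have hiff : ∀ k : Fin (n + 1),
      ((Gmap n i j hij hjn α) k : ℕ) ≤ j - 1 - (q : ℕ) ↔ (k : ℕ) ≤ Kv α q := by
    intro k
    have hA := kv_claimA hmono hbd q (k : ℕ)
    have hvle := cA_le (α := α) (k : ℕ)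
    have hGv : ((Gmap n i j hij hjn α) k : ℕ) = i + cA α (k : ℕ) := rfl
    rw [hGv]
    by_cases hc : Kv α q < (k : ℕ)
    · have := hA.1 hc
      constructor
      · intro h2; omega
      · intro h2; omega
    · have : ¬ (j - i - (q : ℕ) ≤ cA α (k : ℕ)) := fun h2 => hc (hA.2 h2)
      constructor
      · intro h2; omega
      · intro h2; omega
  have hcy : cy (Gmap n i j hij hjn α) (j - 1 - (q : ℕ)) = Kv α q + 1 := by
    unfold cy
    have hset : (Finset.univ.filter fun k : Fin (n + 1) =>
          ((Gmap n i j hij hjn α) k : ℕ) ≤ j - 1 - (q : ℕ))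
        = Finset.univ.filter (fun k : Fin (n + 1) => (k : ℕ) < Kv α q + 1) := by
      apply Finset.filter_congr
      intro k _
      have := hiff k
      constructor
      · intro h2; omega
      · intro h2; omega
    rw [hset, card_filter_lt_val (n + 1) (Kv α q + 1) (by omega)]
  have hFv : (Fmap n j i (Gmap n i j hij hjn α) q : ℕ)
      = j - 1 - (q : ℕ) - (cy (Gmap n i j hij hjn α) (j - 1 - (q : ℕ)) - 1) := rfl
  rw [hFv, hcy]
  omega

lemma GFmap {y : Fin (n + 1) → Fin (n + 1)} (hy : IsUPath n y) (hy0 : (y 0 : ℕ) = i)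
    (hyn : (y (Fin.last n) : ℕ) = j) (hij : i ≤ j) (hjn : j ≤ n) :
    Gmap n i j hij hjn (Fmap n j i y) = y := by
  classical
  funext k
  apply Fin.ext
  have hyk_ub : (y k : ℕ) ≤ j := by
    have h2 := (upath_pair' hy k (Fin.last n) (Fin.le_last k)).1
    omega
  have hyk_lb : i ≤ (y k : ℕ) := by
    have h2 := (upath_pair' hy 0 k (Fin.zero_le k)).1
    omega
  have hKv : ∀ q : Fin (j - i), Kv (Fmap n j i y) q = cy y (j - 1 - (q : ℕ)) - 1 := by
    intro q
    have hqlt := q.isLt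
    have h1 : i ≤ j - 1 - (q : ℕ) := by omega
    have h2 : j - 1 - (q : ℕ) < j := by omega
    have hcyn := cy_le hy hyn h2
    have hr := rise_facts hy hy0 hyn h1 h2 ⟨cy y (j - 1 - (q : ℕ)) - 1, by omega⟩ rfl
    have h3 : cy y (j - 1 - (q : ℕ)) - 1 ≤ j - 1 - (q : ℕ) := hr.2
    have hkv : Kv (Fmap n j i y) q = j - 1 - (q : ℕ) - (Fmap n j i y q : ℕ) := rfl
    have hf : (Fmap n j i y q : ℕ)
        = j - 1 - (q : ℕ) - (cy y (j - 1 - (q : ℕ)) - 1) := rfl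
    omega
  have hcount : cA (Fmap n j i y) (k : ℕ) = (j - i) - (j - (y k : ℕ)) := by
    unfold cA
    have hset : (Finset.univ.filter fun q : Fin (j - i) =>
          Kv (Fmap n j i y) q < (k : ℕ))
        = Finset.univ.filter (fun q : Fin (j - i) => j - (y k : ℕ) ≤ (q : ℕ)) := by
      apply Finset.filter_congr
      intro q _
      rw [hKv q]
      have hqlt := q.isLt
      have h1 : i ≤ j - 1 - (q : ℕ) := by omega
      have h2 : j - 1 - (q : ℕ) < j := by omega
      have hpos := cy_pos hy hy0 h1
      have hiff := cy_iff hy (j - 1 - (q : ℕ)) k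
      constructor
      · intro hlt
        have hnot : ¬ ((y k : ℕ) ≤ j - 1 - (q : ℕ)) := by
          intro hc
          have := hiff.1 hc
          omega
        omega
      · intro hge
        have hnot : ¬ ((k : ℕ) < cy y (j - 1 - (q : ℕ))) := by
          intro hc
          have := hiff.2 hc
          omega
        omega
    rw [hset, card_filter_le_val (j - i) _ (by omega)]
  have hG : ((Gmap n i j hij hjn (Fmap n j i y)) k : ℕ)
      = i + cA (Fmap n j i y) (k : ℕ) := rfl
  omega

lemma Fmap_mem {y : Fin (n + 1) → Fin (n + 1)} (hy : IsUPath n y) (hy0 : (y 0 : ℕ) = i)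
    (hyn : (y (Fin.last n) : ℕ) = j) (hij : i ≤ j) (hjn : j ≤ n) :
    Monotone (Fmap n j i y) ∧
      ∀ q : Fin (j - i), (Fmap n j i y q : ℕ) ≤ j - ((q : ℕ) + 1) := by
  have hval : ∀ q : Fin (j - i), (Fmap n j i y q : ℕ)
      = j - 1 - (q : ℕ) - (cy y (j - 1 - (q : ℕ)) - 1) := fun q => rfl
  constructor
  · intro q q' hqq'
    rw [Fin.le_def, hval q, hval q']
    have hqv : (q : ℕ) ≤ (q' : ℕ) := hqq'
    have hqlt := q.isLt
    have hqlt' := q'.isLt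
    have hh1 : i ≤ j - 1 - (q' : ℕ) := by omega
    have hh2 : j - 1 - (q' : ℕ) < j := by omega
    have hh3 : i ≤ j - 1 - (q : ℕ) := by omega
    have hh4 : j - 1 - (q : ℕ) < j := by omega
    have hmcy : cy y (j - 1 - (q' : ℕ)) ≤ cy y (j - 1 - (q : ℕ)) := cy_mono (by omega)
    have hcyn : cy y (j - 1 - (q : ℕ)) ≤ n := cy_le hy hyn hh4
    have hpos' : 1 ≤ cy y (j - 1 - (q' : ℕ)) := cy_pos hy hy0 hh1
    have hb1 : cy y (j - 1 - (q' : ℕ)) - 1 < n + 1 := by omega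
    have hb2 : cy y (j - 1 - (q : ℕ)) - 1 < n + 1 := by omega
    set k1 : Fin (n + 1) := ⟨cy y (j - 1 - (q' : ℕ)) - 1, hb1⟩ with hk1
    set k2 : Fin (n + 1) := ⟨cy y (j - 1 - (q : ℕ)) - 1, hb2⟩ with hk2
    have hr1 := rise_facts hy hy0 hyn hh1 hh2 k1 rfl
    have hr2 := rise_facts hy hy0 hyn hh3 hh4 k2 rfl
    have hkle : k1 ≤ k2 := by
      rw [Fin.le_def]
      simp only [hk1, hk2]
      omega
    have hpair := (upath_pair' hy k1 k2 hkle).2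
    have hv1 : (k1 : ℕ) = cy y (j - 1 - (q' : ℕ)) - 1 := rfl
    have hv2 : (k2 : ℕ) = cy y (j - 1 - (q : ℕ)) - 1 := rfl
    omega
  · intro q
    rw [hval q]
    have hqlt := q.isLt
    omega

lemma Gmap_weight {R : Type*} [CommRing R] (t : ℕ → ℕ → R) (hij : i ≤ j) (hjn : j ≤ n)
    (hmono : Monotone α) (hbd : ∀ q : Fin (j - i), (α q : ℕ) ≤ j - ((q : ℕ) + 1)) :
    uweight n t (Gmap n i j hij hjn α) = ∏ q : Fin (j - i), t (α q : ℕ) (j - (q : ℕ)) := by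
  classical
  set y' := Gmap n i j hij hjn α with hy'
  have hKlt : ∀ q : Fin (j - i), Kv α q < n := by
    intro q
    have hqlt := q.isLt
    have hkv : Kv α q = j - 1 - (q : ℕ) - (α q : ℕ) := rfl
    omega
  set e : Fin (j - i) → Fin n := fun q => ⟨Kv α q, hKlt q⟩ with he
  have huw : uweight n t y' = ∏ k : Fin n,
      (if (y' k.succ : ℕ) = (y' k.castSucc : ℕ) + 1
        then t ((y' k.castSucc : ℕ) - (k : ℕ)) ((y' k.castSucc : ℕ) + 1) else 1) := rfl
  rw [huw]
  have hsv : ∀ k : Fin n, (y' k.succ : ℕ) = i + cA α ((k : ℕ) + 1) := fun k => rfl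
  have hcv : ∀ k : Fin n, (y' k.castSucc : ℕ) = i + cA α (k : ℕ) := fun k => rfl
  have h1 : ∏ k : Fin n,
      (if (y' k.succ : ℕ) = (y' k.castSucc : ℕ) + 1
        then t ((y' k.castSucc : ℕ) - (k : ℕ)) ((y' k.castSucc : ℕ) + 1) else 1)
      = ∏ k ∈ Finset.univ.image e,
      (if (y' k.succ : ℕ) = (y' k.castSucc : ℕ) + 1
        then t ((y' k.castSucc : ℕ) - (k : ℕ)) ((y' k.castSucc : ℕ) + 1) else 1) := by
    refine (Finset.prod_subset (Finset.subset_univ _) ?_).symm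
    intro k _ hk
    have hnor : ∀ q : Fin (j - i), Kv α q ≠ (k : ℕ) := by
      intro q hq
      exact hk (Finset.mem_image.mpr ⟨q, Finset.mem_univ q, Fin.ext hq⟩)
    have h0 := cA_succ_no_rise hnor
    rw [if_neg]
    rw [hsv k, hcv k]
    omega
  rw [h1]
  rw [Finset.prod_image (fun q _ q' _ h => kv_injective hmono hbd (congrArg Fin.val h))]
  apply Finset.prod_congr rfl
  intro q _
  have hqlt := q.isLt
  have hbq := hbd q
  have hkv : Kv α q = j - 1 - (q : ℕ) - (α q : ℕ) := rfl
  have hcv1 : (y' (e q).castSucc : ℕ) = i + cA α (Kv α q) := rfl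
  have hsv1 : (y' (e q).succ : ℕ) = i + cA α (Kv α q + 1) := rfl
  have h1' := (cA_kv hmono hbd q).1
  have h2' := (cA_kv hmono hbd q).2
  rw [if_pos]
  · have hev : ((e q : Fin n) : ℕ) = Kv α q := rfl
    rw [hcv1, hev, h1']
    have ea : i + (j - i - 1 - (q : ℕ)) - Kv α q = (α q : ℕ) := by omega
    have eb : i + (j - i - 1 - (q : ℕ)) + 1 = j - (q : ℕ) := by omega
    rw [ea, eb]
  · rw [hsv1, hcv1, h1', h2']
    omega

end Bijection

/-- Closed-form formula for the entries of `U n`: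
`U n [i, j] = ∑_{α ∈ Q^I_{j,i}} ∏_{r=i}^{j-1} t (α (j-r)) (r+1)`, the product being
reindexed by `q = j - r - 1 ∈ {0, …, j-i-1}` (zero-indexed), so the factor for `q` is
`t (α q) (j - q)`. -/
theorem stmt10 {R : Type*} [CommRing R] (n : ℕ) (t : ℕ → ℕ → R) (i j : Fin (n + 1)) :
    Umat n t i j =
      ∑ α ∈ QIset (j : ℕ) (i : ℕ),
        ∏ q : Fin ((j : ℕ) - (i : ℕ)), t (α q : ℕ) ((j : ℕ) - (q : ℕ)) := by
  classical
  have hjn : (j : ℕ) ≤ n := Fin.is_le j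
  simp only [Umat, Matrix.of_apply]
  rcases Nat.lt_or_ge (j : ℕ) (i : ℕ) with hij | hij
  · have hQ : QIset (j : ℕ) (i : ℕ) = ∅ := by
      rw [QIset, if_neg (by omega)]
    rw [hQ, Finset.sum_empty]
    apply Finset.sum_eq_zero
    intro y hy
    simp only [Finset.mem_filter, Finset.mem_univ, true_and] at hy
    obtain ⟨hpath, h0, hn⟩ := hy
    exfalso
    have h1 := (upath_pair' hpath 0 (Fin.last n) (Fin.zero_le _)).1
    rw [h0, hn] at h1
    omega
  · have hQmem : ∀ β : Fin ((j : ℕ) - (i : ℕ)) → Fin ((j : ℕ) + 1),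
        β ∈ QIset (j : ℕ) (i : ℕ) ↔
          Monotone β ∧ ∀ q : Fin ((j : ℕ) - (i : ℕ)), (β q : ℕ) ≤ (j : ℕ) - ((q : ℕ) + 1) := by
      intro β
      rw [QIset, if_pos hij]
      simp
    refine (Finset.sum_bij' (i := fun β _ => Gmap n (i : ℕ) (j : ℕ) hij hjn β)
      (j := fun y _ => Fmap n (j : ℕ) (i : ℕ) y) ?_ ?_ ?_ ?_ ?_).symm
    · intro β hβ
      obtain ⟨hmono, hbd⟩ := (hQmem β).1 hβ
      simp only [Finset.mem_filter, Finset.mem_univ, true_and]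
      exact ⟨Gmap_isUPath hij hjn hmono hbd, Fin.ext (Gmap_zero hij hjn),
        Fin.ext (Gmap_last hij hjn)⟩
    · intro y hy
      simp only [Finset.mem_filter, Finset.mem_univ, true_and] at hy
      obtain ⟨hpath, h0, hn⟩ := hy
      exact (hQmem _).2 (Fmap_mem hpath (congrArg Fin.val h0) (congrArg Fin.val hn) hij hjn)
    · intro β hβ
      obtain ⟨hmono, hbd⟩ := (hQmem β).1 hβ
      exact FGmap hij hjn hmono hbd
    · intro y hy
      simp only [Finset.mem_filter, Finset.mem_univ, true_and] at hy
      obtain ⟨hpath, h0, hn⟩ := hy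
      exact GFmap hpath (congrArg Fin.val h0) (congrArg Fin.val hn) hij hjn
    · intro β hβ
      obtain ⟨hmono, hbd⟩ := (hQmem β).1 hβ
      exact (Gmap_weight t hij hjn hmono hbd).symm
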